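/- arXiv:2404.12008 — 2 statements merged into one kernel-verified Lean document; each statement's English description precedes it below -/
import Mathlib

section
/- Let Y ∈ {0,1}^{n×m} be a binary matrix whose column-sum vector r = Yᵀe satisfies the power law r_g = r_max · g^(−α) for g = 1,…,m with r_max > 0 and α > 1. Let (σ1, p1, q1) be a principal singular triple of Y in which p1 and q1 are entrywise nonnegative. Then cos(r, q1) ≥ (σ1² / (r_max · √ζ(2α))) · √(1 − r_max(ζ(α) − 1)/σ1²). -/
open Matrix

/-- Riemann zeta function for real `s > 1`: `ζ(s) = ∑_{j=1}^∞ j^(−s)`. -/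
noncomputable def zetaR (s : ℝ) : ℝ := ∑' j : ℕ, ((j : ℝ) + 1) ^ (-s)

/-- Euclidean (L2) norm of a vector. -/
noncomputable def euclNorm {k : ℕ} (v : Fin k → ℝ) : ℝ := Real.sqrt (∑ i, v i ^ 2)

/-- Cosine similarity of two vectors. -/
noncomputable def vcos {k : ℕ} (x y : Fin k → ℝ) : ℝ :=
  (∑ i, x i * y i) / (euclNorm x * euclNorm y)

/-!
Write `S = ∑ p1` and `c = Yᵀ p1 = σ1 q1`, so `‖c‖² = σ1²` and `⟨r, q1⟩ = eᵀ Y q1 = σ1 S`.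
Since `Y` is binary and `p1 ≥ 0`, the first entry satisfies `c₁ ≤ S`, and by Cauchy–Schwarz
every entry satisfies `c_i² ≤ r_i ‖p1‖² = r_i`. Hence
`σ1² ≤ S² + ∑_{i ≥ 2} r_i ≤ S² + r_max (ζ(α) − 1)`, i.e. `S ≥ √(σ1² − r_max (ζ(α) − 1))`,
while `‖r‖ ≤ r_max √ζ(2α)` and `cos(r, q1) = σ1 S / ‖r‖`.
-/

theorem summable_nat_add_one_rpow_neg {s : ℝ} (hs : 1 < s) :
    Summable fun j : ℕ => ((j : ℝ) + 1) ^ (-s) := by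
  have h : Summable fun j : ℕ => (j : ℝ) ^ (-s) := Real.summable_nat_rpow.mpr (by linarith)
  exact_mod_cast (summable_nat_add_iff 1).mpr h

theorem sum_fin_rpow_neg_le_zetaR {s : ℝ} (hs : 1 < s) (m : ℕ) :
    ∑ g : Fin m, (((g : ℕ) : ℝ) + 1) ^ (-s) ≤ zetaR s := by
  rw [Fin.sum_univ_eq_sum_range (fun j => ((j : ℝ) + 1) ^ (-s))]
  exact (summable_nat_add_one_rpow_neg hs).sum_le_tsum _ fun j _ => by positivity

-- Columns are indexed from `0`: the paper's column `g` is `g - 1` here.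
def IsPowerLaw {m : ℕ} (r : Fin m → ℝ) (rmax α : ℝ) : Prop :=
  ∀ g : Fin m, r g = rmax * (((g : ℕ) : ℝ) + 1) ^ (-α)

namespace IsPowerLaw

variable {m : ℕ} {r : Fin m → ℝ} {rmax α : ℝ}

theorem apply_zero [NeZero m] (h : IsPowerLaw r rmax α) : r 0 = rmax := by
  simp [h 0]

theorem sum_le (h : IsPowerLaw r rmax α) (hα : 1 < α) (hrmax : 0 ≤ rmax) :
    ∑ g, r g ≤ rmax * zetaR α := by
  rw [Finset.sum_congr rfl fun g _ => h g, ← Finset.mul_sum]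
  exact mul_le_mul_of_nonneg_left (sum_fin_rpow_neg_le_zetaR hα m) hrmax

theorem euclNorm_le (h : IsPowerLaw r rmax α) (hα : 1 < α) (hrmax : 0 ≤ rmax) :
    euclNorm r ≤ rmax * Real.sqrt (zetaR (2 * α)) := by
  have hsq : ∀ g : Fin m, r g ^ 2 = rmax ^ 2 * (((g : ℕ) : ℝ) + 1) ^ (-(2 * α)) := by
    intro g
    rw [h g, mul_pow, ← Real.rpow_mul_natCast (by positivity)]
    ring_nf
  have hsum : ∑ g, r g ^ 2 ≤ rmax ^ 2 * zetaR (2 * α) := by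
    simp_rw [hsq, ← Finset.mul_sum]
    exact mul_le_mul_of_nonneg_left (sum_fin_rpow_neg_le_zetaR (by linarith) m) (sq_nonneg _)
  rw [← Real.sqrt_sq hrmax, ← Real.sqrt_mul (sq_nonneg _)]
  exact Real.sqrt_le_sqrt hsum

theorem euclNorm_pos [NeZero m] (h : IsPowerLaw r rmax α) (hrmax : 0 < rmax) :
    0 < euclNorm r := by
  refine Real.sqrt_pos.mpr (Finset.sum_pos' (fun g _ => sq_nonneg _) ⟨0, Finset.mem_univ _, ?_⟩)
  rw [h.apply_zero]
  positivity

end IsPowerLaw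

section BinaryMatrix

variable {ι κ : Type*} [Fintype ι] {Y : Matrix ι κ ℝ}

theorem transpose_mulVec_apply_sq_le (hbin : ∀ u i, Y u i = 0 ∨ Y u i = 1) (p : ι → ℝ) (i : κ) :
    (Yᵀ *ᵥ p) i ^ 2 ≤ (∑ u, Y u i) * ∑ u, p u ^ 2 := by
  have hY : ∀ u, Y u i ^ 2 = Y u i := fun u => by rcases hbin u i with h | h <;> simp [h]
  simpa [mulVec, dotProduct, hY] using Finset.sum_mul_sq_le_sq_mul_sq Finset.univ (Y · i) p

theorem transpose_mulVec_apply_sq_le_sq_sum (hbin : ∀ u i, Y u i = 0 ∨ Y u i = 1)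
    {p : ι → ℝ} (hp : ∀ u, 0 ≤ p u) (i : κ) :
    (Yᵀ *ᵥ p) i ^ 2 ≤ (∑ u, p u) ^ 2 := by
  have hterm : ∀ u, 0 ≤ Y u i * p u ∧ Y u i * p u ≤ p u := fun u => by
    rcases hbin u i with h | h <;> simp [h, hp u]
  have hc : (Yᵀ *ᵥ p) i = ∑ u, Y u i * p u := by simp [mulVec, dotProduct]
  rw [hc]
  exact pow_le_pow_left₀ (Finset.sum_nonneg fun u _ => (hterm u).1)
    (Finset.sum_le_sum fun u _ => (hterm u).2) 2

theorem sum_transpose_mulVec_sq_le [Fintype κ] [DecidableEq κ]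
    (hbin : ∀ u i, Y u i = 0 ∨ Y u i = 1) {p : ι → ℝ} (hp : ∀ u, 0 ≤ p u)
    (hp1 : ∑ u, p u ^ 2 = 1) (i₀ : κ) :
    ∑ i, (Yᵀ *ᵥ p) i ^ 2 ≤ (∑ u, p u) ^ 2 + ∑ i ∈ Finset.univ.erase i₀, ∑ u, Y u i := by
  rw [← Finset.add_sum_erase _ _ (Finset.mem_univ i₀)]
  exact add_le_add (transpose_mulVec_apply_sq_le_sq_sum hbin hp i₀) <| Finset.sum_le_sum fun i _ =>
    (transpose_mulVec_apply_sq_le hbin p i).trans_eq (by rw [hp1, mul_one])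

end BinaryMatrix

theorem sq_mul_sqrt_one_sub_div_sq {σ : ℝ} (hσ : 0 ≤ σ) (K : ℝ) :
    σ ^ 2 * Real.sqrt (1 - K / σ ^ 2) = σ * Real.sqrt (σ ^ 2 - K) := by
  rcases hσ.eq_or_lt with rfl | hσ
  · simp
  have h : σ * Real.sqrt (1 - K / σ ^ 2) = Real.sqrt (σ ^ 2 - K) := calc
    σ * Real.sqrt (1 - K / σ ^ 2) = Real.sqrt (σ ^ 2) * Real.sqrt (1 - K / σ ^ 2) := by
      rw [Real.sqrt_sq hσ.le]
    _ = Real.sqrt (σ ^ 2 * (1 - K / σ ^ 2)) := (Real.sqrt_mul (sq_nonneg _) _).symm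
    _ = Real.sqrt (σ ^ 2 - K) := by
      congr 1
      field_simp
  calc σ ^ 2 * Real.sqrt (1 - K / σ ^ 2) = σ * (σ * Real.sqrt (1 - K / σ ^ 2)) := by ring
    _ = σ * Real.sqrt (σ ^ 2 - K) := by rw [h]

theorem popularity_memorization_bound_general
    (n m : ℕ) (Y : Matrix (Fin n) (Fin m) ℝ)
    (hbin : ∀ u i, Y u i = 0 ∨ Y u i = 1)
    (α rmax : ℝ) (hα : 1 < α) (hrmax : 0 < rmax)
    (r : Fin m → ℝ) (hrdef : r = Yᵀ.mulVec (fun _ => 1))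
    (hpow : ∀ g : Fin m, r g = rmax * (((g : ℕ) : ℝ) + 1) ^ (-α))
    (σ1 : ℝ) (p1 : Fin n → ℝ) (q1 : Fin m → ℝ)
    (hσnn : 0 ≤ σ1)
    (hp1 : euclNorm p1 = 1) (hq1 : euclNorm q1 = 1)
    (hYq : Y.mulVec q1 = σ1 • p1) (hYp : Yᵀ.mulVec p1 = σ1 • q1)
    (hpnn : ∀ u, 0 ≤ p1 u) :
    vcos r q1 ≥ σ1 ^ 2 / (rmax * Real.sqrt (zetaR (2 * α)))
      * Real.sqrt (1 - rmax * (zetaR α - 1) / σ1 ^ 2) := by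
  have : NeZero m := ⟨by rintro rfl; simp [euclNorm] at hq1⟩
  have hpow : IsPowerLaw r rmax α := hpow
  set S := ∑ u, p1 u
  have hS : 0 ≤ S := Finset.sum_nonneg fun u _ => hpnn u
  have hcos : vcos r q1 = σ1 * S / euclNorm r := by
    have hnum : ∑ i, r i * q1 i = σ1 * S := by
      change r ⬝ᵥ q1 = _
      rw [hrdef, mulVec_transpose, ← dotProduct_mulVec, hYq, dotProduct_smul, smul_eq_mul]
      exact congrArg (σ1 * ·) (one_dotProduct p1)
    rw [vcos, hnum, hq1, mul_one]
  have hσ : σ1 ^ 2 ≤ S ^ 2 + rmax * (zetaR α - 1) := calc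
    σ1 ^ 2 = ∑ i, (Yᵀ *ᵥ p1) i ^ 2 := by
      simp [hYp, mul_pow, ← Finset.mul_sum, Real.sqrt_eq_one.mp hq1]
    _ ≤ S ^ 2 + ∑ i ∈ Finset.univ.erase 0, r i := by
      simpa [hrdef, mulVec, dotProduct] using
        sum_transpose_mulVec_sq_le hbin hpnn (Real.sqrt_eq_one.mp hp1) 0
    _ ≤ S ^ 2 + rmax * (zetaR α - 1) := by
      rw [Finset.sum_erase_eq_sub (Finset.mem_univ 0), hpow.apply_zero]
      linarith [hpow.sum_le hα hrmax.le]
  rw [ge_iff_le, div_mul_eq_mul_div, sq_mul_sqrt_one_sub_div_sq hσnn, hcos]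
  calc σ1 * Real.sqrt (σ1 ^ 2 - rmax * (zetaR α - 1)) / (rmax * Real.sqrt (zetaR (2 * α)))
      ≤ σ1 * S / (rmax * Real.sqrt (zetaR (2 * α))) := by
        gcongr
        exact Real.sqrt_le_iff.mpr ⟨hS, by linarith⟩
    _ ≤ σ1 * S / euclNorm r := by
        gcongr
        exacts [hpow.euclNorm_pos hrmax, hpow.euclNorm_le hα hrmax.le]

/-- Let `Y ∈ {0,1}^{n×m}` be a binary matrix whose column-sum vector
`r = Yᵀe` satisfies the power law `r_g = r_max · g^(−α)` with `r_max > 0` and `α > 1`.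
Let `(σ1, p1, q1)` be a principal singular triple of `Y` (σ1 the largest singular value,
i.e., the operator 2-norm, `p1, q1` unit vectors with `Y q1 = σ1 p1`, `Yᵀ p1 = σ1 q1`)
where `p1` and `q1` are entrywise nonnegative.  Then
`cos(r, q1) ≥ (σ1² / (r_max √ζ(2α))) · √(1 − r_max(ζ(α) − 1)/σ1²)`. -/
theorem popularity_memorization_bound
    (n m : ℕ) (Y : Matrix (Fin n) (Fin m) ℝ)
    (hbin : ∀ u i, Y u i = 0 ∨ Y u i = 1)
    (α rmax : ℝ) (hα : 1 < α) (hrmax : 0 < rmax)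
    (r : Fin m → ℝ) (hrdef : r = Yᵀ.mulVec (fun _ => 1))
    (hpow : ∀ g : Fin m, r g = rmax * (((g : ℕ) : ℝ) + 1) ^ (-α))
    (σ1 : ℝ) (p1 : Fin n → ℝ) (q1 : Fin m → ℝ)
    (hσnn : 0 ≤ σ1)
    (hop : ∀ q : Fin m → ℝ, euclNorm q = 1 → euclNorm (Y.mulVec q) ≤ σ1)
    (hp1 : euclNorm p1 = 1) (hq1 : euclNorm q1 = 1)
    (hYq : Y.mulVec q1 = σ1 • p1) (hYp : Yᵀ.mulVec p1 = σ1 • q1)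
    (hpnn : ∀ u, 0 ≤ p1 u) (hqnn : ∀ i, 0 ≤ q1 i) :
    vcos r q1 ≥ σ1 ^ 2 / (rmax * Real.sqrt (zetaR (2 * α)))
      * Real.sqrt (1 - rmax * (zetaR α - 1) / σ1 ^ 2) :=
  popularity_memorization_bound_general n m Y hbin α rmax hα hrmax r hrdef hpow σ1 p1 q1 hσnn hp1
    hq1 hYq hYp hpnn
end

section
/- Let Y ∈ {0,1}^{n×m} be a binary matrix whose column-sum vector r = Yᵀe satisfies the power law r_g = r_max · g^(−α) for g = 1,…,m with r_max > 0 and α > 1, and let (σ1, p1, q1) be a principal singular triple of Y with σ1 > 0 and with p1 and q1 entrywise nonnegative. Then ⟨e, p1⟩ ≥ σ1 · √(1 − r_max(ζ(α) − 1)/σ1²). -/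
/-!
Write `S = ⟨e, p₁⟩`. Since `Yᵀ p₁ = σ₁ q₁`, each `σ₁ q₁ᵢ = ∑ᵤ Yᵤᵢ p₁ᵤ` is at most `S` (the entries of
`Y` lie in `[0, 1]` and `p₁ ≥ 0`), and by Cauchy–Schwarz its square is at most the column sum `rᵢ`
(`Yᵤᵢ² = Yᵤᵢ` and `‖p₁‖ = 1`). Splitting `σ₁² = ∑ᵢ (σ₁ q₁ᵢ)²` into the first column and the rest gives
`σ₁² ≤ S² + ∑_{g ≥ 2} r_g ≤ S² + r_max (ζ(α) - 1)`, which rearranges to the claim.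
-/

open Matrix

noncomputable def enormL2 {k : ℕ} (v : Fin k → ℝ) : ℝ := Real.sqrt (∑ i, v i ^ 2)

open Finset

theorem enormL2_eq_one_iff {k : ℕ} (v : Fin k → ℝ) : enormL2 v = 1 ↔ ∑ i, v i ^ 2 = 1 :=
  Real.sqrt_eq_one

theorem sum_rpow_neg_add_two_le_zetaR_sub_one {α : ℝ} (hα : 1 < α) (k : ℕ) :
    ∑ i : Fin k, ((i : ℝ) + 1 + 1) ^ (-α) ≤ zetaR α - 1 := by
  have hsum : Summable fun j : ℕ => ((j : ℝ) + 1) ^ (-α) := by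
    simpa using (summable_nat_add_iff 1).mpr (Real.summable_nat_rpow.mpr (by linarith))
  have hsum' : Summable fun j : ℕ => ((j : ℝ) + 1 + 1) ^ (-α) := by
    simpa using (summable_nat_add_iff 1).mpr hsum
  have hzeta : zetaR α = 1 + ∑' j : ℕ, ((j : ℝ) + 1 + 1) ^ (-α) := by
    rw [zetaR, hsum.tsum_eq_zero_add]
    simp
  rw [hzeta, add_sub_cancel_left, Fin.sum_univ_eq_sum_range (fun j => ((j : ℝ) + 1 + 1) ^ (-α))]
  exact hsum'.sum_le_tsum _ fun j _ => by positivity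

section UnitIntervalWeights

variable {ι : Type*} [Fintype ι] {c p : ι → ℝ}

theorem sum_mul_le_sum_of_le_one (hc : ∀ u, c u ≤ 1) (hp : ∀ u, 0 ≤ p u) :
    ∑ u, c u * p u ≤ ∑ u, p u :=
  sum_le_sum fun u _ => mul_le_of_le_one_left (hp u) (hc u)

theorem sq_sum_mul_le_sum_of_mem_Icc (hc : ∀ u, c u ∈ Set.Icc (0 : ℝ) 1)
    (hp : ∑ u, p u ^ 2 = 1) : (∑ u, c u * p u) ^ 2 ≤ ∑ u, c u :=
  calc (∑ u, c u * p u) ^ 2 ≤ (∑ u, c u ^ 2) * ∑ u, p u ^ 2 := sum_mul_sq_le_sq_mul_sq _ _ _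
    _ ≤ ∑ u, c u := by
      rw [hp, mul_one]
      exact sum_le_sum fun u _ => pow_le_of_le_one (hc u).1 (hc u).2 two_ne_zero

end UnitIntervalWeights

theorem sq_le_sq_sum_add_sum_erase_colSum {ι κ : Type*} [Fintype ι] [Fintype κ] [DecidableEq κ]
    (Y : Matrix ι κ ℝ) (hY : ∀ u i, Y u i ∈ Set.Icc (0 : ℝ) 1) {σ : ℝ} {p : ι → ℝ} {q : κ → ℝ}
    (hp : ∀ u, 0 ≤ p u) (hp1 : ∑ u, p u ^ 2 = 1) (hq1 : ∑ i, q i ^ 2 = 1)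
    (hYp : Yᵀ *ᵥ p = σ • q) (i₀ : κ) :
    σ ^ 2 ≤ (∑ u, p u) ^ 2 + ∑ i ∈ univ.erase i₀, ∑ u, Y u i := by
  have hcol : ∀ i, σ * q i = ∑ u, Y u i * p u := fun i => by
    simpa [mulVec_transpose, vecMul, dotProduct, mul_comm] using (congrFun hYp i).symm
  have hfirst : (σ * q i₀) ^ 2 ≤ (∑ u, p u) ^ 2 := by
    rw [hcol]
    exact pow_le_pow_left₀ (sum_nonneg fun u _ => mul_nonneg (hY u i₀).1 (hp u))
      (sum_mul_le_sum_of_le_one (fun u => (hY u i₀).2) hp) 2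
  calc σ ^ 2 = ∑ i, (σ * q i) ^ 2 := by simp only [mul_pow, ← mul_sum, hq1, mul_one]
    _ = (σ * q i₀) ^ 2 + ∑ i ∈ univ.erase i₀, (σ * q i) ^ 2 :=
      (add_sum_erase _ _ (mem_univ i₀)).symm
    _ ≤ (∑ u, p u) ^ 2 + ∑ i ∈ univ.erase i₀, ∑ u, Y u i := by
      refine add_le_add hfirst (sum_le_sum fun i _ => ?_)
      rw [hcol]
      exact sq_sum_mul_le_sum_of_mem_Icc (fun u => hY u i) hp1

theorem mul_sqrt_one_sub_div_sq_le {σ c S : ℝ} (hσ : 0 < σ) (hS : 0 ≤ S) (h : σ ^ 2 - c ≤ S ^ 2) :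
    σ * Real.sqrt (1 - c / σ ^ 2) ≤ S := by
  have hσc : σ * Real.sqrt (1 - c / σ ^ 2) = Real.sqrt (σ ^ 2 - c) := by
    rw [show σ ^ 2 - c = σ ^ 2 * (1 - c / σ ^ 2) by field_simp, Real.sqrt_mul (sq_nonneg σ),
      Real.sqrt_sq hσ.le]
  rw [hσc]
  exact Real.sqrt_le_iff.mpr ⟨hS, h⟩

theorem ones_inner_p1_lower_bound_general
    (n m : ℕ) (Y : Matrix (Fin n) (Fin m) ℝ)
    (hbin : ∀ u i, Y u i = 0 ∨ Y u i = 1)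
    (α rmax : ℝ) (hα : 1 < α) (hrmax : 0 < rmax)
    (r : Fin m → ℝ) (hrdef : r = Yᵀ.mulVec (fun _ => 1))
    (hpow : ∀ g : Fin m, r g = rmax * (((g : ℕ) : ℝ) + 1) ^ (-α))
    (σ1 : ℝ) (p1 : Fin n → ℝ) (q1 : Fin m → ℝ)
    (hσpos : 0 < σ1)
    (hp1 : enormL2 p1 = 1) (hq1 : enormL2 q1 = 1)
    (hYp : Yᵀ.mulVec p1 = σ1 • q1)
    (hpnn : ∀ u, 0 ≤ p1 u) :
    σ1 * Real.sqrt (1 - rmax * (zetaR α - 1) / σ1 ^ 2) ≤ ∑ u, p1 u := by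
  rw [enormL2_eq_one_iff] at hp1 hq1
  obtain ⟨k, rfl⟩ : ∃ k, m = k + 1 :=
    Nat.exists_eq_succ_of_ne_zero (by rintro rfl; simp at hq1)
  have hY : ∀ u i, Y u i ∈ Set.Icc (0 : ℝ) 1 := fun u i => by
    rcases hbin u i with h | h <;> simp [h]
  have hcolSum : ∀ i, ∑ u, Y u i = rmax * (((i : ℕ) : ℝ) + 1) ^ (-α) := fun i => by
    simpa [hrdef, mulVec, dotProduct] using hpow i
  have htail : ∑ i ∈ univ.erase 0, ∑ u, Y u i ≤ rmax * (zetaR α - 1) := by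
    have hsplit := add_sum_erase univ (fun i => ∑ u, Y u i) (mem_univ 0)
    rw [Fin.sum_univ_succ, add_left_cancel_iff] at hsplit
    rw [hsplit]
    simp only [hcolSum, Fin.val_succ, Nat.cast_succ, ← mul_sum]
    exact mul_le_mul_of_nonneg_left (sum_rpow_neg_add_two_le_zetaR_sub_one hα k) hrmax.le
  refine mul_sqrt_one_sub_div_sq_le hσpos (sum_nonneg fun u _ => hpnn u) ?_
  linarith [sq_le_sq_sum_add_sum_erase_colSum Y hY hpnn hp1 hq1 hYp 0]

/-- Let `Y ∈ {0,1}^{n×m}` be a binary matrix whose column-sum vector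
`r = Yᵀe` satisfies the power law `r_g = r_max · g^(−α)` with `r_max > 0` and `α > 1`,
and let `(σ1, p1, q1)` be a principal singular triple of `Y` with `σ1 > 0` and with
`p1, q1` entrywise nonnegative.  Then `⟨e, p1⟩ ≥ σ1 · √(1 − r_max(ζ(α) − 1)/σ1²)`. -/
theorem ones_inner_p1_lower_bound
    (n m : ℕ) (Y : Matrix (Fin n) (Fin m) ℝ)
    (hbin : ∀ u i, Y u i = 0 ∨ Y u i = 1)
    (α rmax : ℝ) (hα : 1 < α) (hrmax : 0 < rmax)
    (r : Fin m → ℝ) (hrdef : r = Yᵀ.mulVec (fun _ => 1))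
    (hpow : ∀ g : Fin m, r g = rmax * (((g : ℕ) : ℝ) + 1) ^ (-α))
    (σ1 : ℝ) (p1 : Fin n → ℝ) (q1 : Fin m → ℝ)
    (hσpos : 0 < σ1)
    (hop : ∀ q : Fin m → ℝ, enormL2 q = 1 → enormL2 (Y.mulVec q) ≤ σ1)
    (hp1 : enormL2 p1 = 1) (hq1 : enormL2 q1 = 1)
    (hYq : Y.mulVec q1 = σ1 • p1) (hYp : Yᵀ.mulVec p1 = σ1 • q1)
    (hpnn : ∀ u, 0 ≤ p1 u) (hqnn : ∀ i, 0 ≤ q1 i) :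
    σ1 * Real.sqrt (1 - rmax * (zetaR α - 1) / σ1 ^ 2) ≤ ∑ u, p1 u :=
  ones_inner_p1_lower_bound_general n m Y hbin α rmax hα hrmax r hrdef hpow σ1 p1 q1 hσpos hp1 hq1
    hYp hpnn
end
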